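/- Let k > 0 and l ≥ 0, with k = 2πh. The 3×3 matrix M(y) = [[-k - y, 0, -i√(2πh l)], [0, k - y, -ik√((l+1)/(2πh))], [ik√(l/(2πh)), i√(2πh(l+1)), 1 - y]] has determinant, as a polynomial in y, equal to -y(y² - y - (2l+1)k - k²); equivalently, its characteristic equation is y(y² - y - (2l+1)k - k²) = 0, with roots y = 0 and y = 1/2 ± (1/2)√(1 + 4(2l+1)k + 4k²). -/
import Mathlib


open Real Complex Matrix

/-- Let `h > 0`, `k = 2πh`, `l : ℕ`. The 3×3 matrix arising from the localised Hodge
Laplacian on 1-forms on the Heisenberg group (shifted by `x = y + (2l+1)k + k²`), namely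
`M(y) = [[-k - y, 0, -i√(2πhl)], [0, k - y, -ik√((l+1)/(2πh))],
[ik√(l/(2πh)), i√(2πh(l+1)), 1 - y]]`, has determinant `-y(y² - y - (2l+1)k - k²)`; in
particular its characteristic equation is `y(y² - y - (2l+1)k - k²) = 0`, with roots
`y = 0` and `y = 1/2 ± (1/2)√(1 + 4(2l+1)k + 4k²)`. -/
theorem localised_laplacian_one_forms_det (h : ℝ) (hh : 0 < h) (k : ℝ) (hk : k = 2 * π * h)
    (l : ℕ) (y : ℂ)
    (M : Matrix (Fin 3) (Fin 3) ℂ)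
    (hM : M = !![(-k : ℂ) - y, 0, -Complex.I * (Real.sqrt (2 * π * h * l) : ℝ);
        0, (k : ℂ) - y, -Complex.I * k * (Real.sqrt ((l + 1) / (2 * π * h)) : ℝ);
        Complex.I * k * (Real.sqrt (l / (2 * π * h)) : ℝ),
        Complex.I * (Real.sqrt (2 * π * h * (l + 1)) : ℝ), 1 - y]) :
    M.det = -(y * (y ^ 2 - y - (2 * l + 1) * k - (k : ℂ) ^ 2)) ∧
      (M.det = 0 ↔ y = 0 ∨ y = 1 / 2 + (1 / 2) * Real.sqrt (1 + 4 * (2 * l + 1) * k + 4 * k ^ 2)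
        ∨ y = 1 / 2 - (1 / 2) * Real.sqrt (1 + 4 * (2 * l + 1) * k + 4 * k ^ 2)) := by
  have hp : (0:ℝ) < 2 * π * h := by positivity
  have key : ∀ (a b c d : ℝ), (a:ℂ) * c = l → (b:ℂ) * d = l + 1 →
      (!![(-k : ℂ) - y, 0, -Complex.I * (a : ℝ);
        0, (k : ℂ) - y, -Complex.I * k * (b : ℝ);
        Complex.I * k * (c : ℝ),
        Complex.I * (d : ℝ), 1 - y]).det
      = -(y * (y ^ 2 - y - (2 * l + 1) * k - (k : ℂ) ^ 2)) := by
    intro a b c d hAC hBD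
    simp [Matrix.det_fin_three]
    linear_combination (-(k:ℂ) * ((k:ℂ) - y)) * hAC + ((k:ℂ) * ((k:ℂ) + y)) * hBD
      + ((k:ℂ) * ((k:ℂ) - y) * (c:ℂ) * (a:ℂ) - (k:ℂ) * ((k:ℂ) + y) * (b:ℂ) * (d:ℂ)) * Complex.I_sq
  have hAC : Real.sqrt (2 * π * h * l) * Real.sqrt (l / (2 * π * h)) = l := by
    rw [← Real.sqrt_mul (by positivity)]
    rw [show 2 * π * h * l * (l / (2 * π * h)) = (l:ℝ) * l by field_simp]
    exact Real.sqrt_mul_self (Nat.cast_nonneg l)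
  have hBD : Real.sqrt ((l + 1) / (2 * π * h)) * Real.sqrt (2 * π * h * (l + 1)) = l + 1 := by
    rw [← Real.sqrt_mul (by positivity)]
    rw [show ((l:ℝ) + 1) / (2 * π * h) * (2 * π * h * (l + 1)) = ((l:ℝ)+1) * ((l:ℝ)+1) by
      field_simp]
    exact Real.sqrt_mul_self (by positivity)
  have hdet : M.det = -(y * (y ^ 2 - y - (2 * l + 1) * k - (k : ℂ) ^ 2)) := by
    rw [hM]
    apply key
    · rw [← Complex.ofReal_mul, hAC]; norm_cast
    · rw [← Complex.ofReal_mul, hBD]; push_cast; ring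
  refine ⟨hdet, ?_⟩
  set D : ℝ := Real.sqrt (1 + 4 * (2 * l + 1) * k + 4 * k ^ 2) with hD
  have hk0 : (0:ℝ) < k := by rw [hk]; positivity
  have hDsq' : D ^ 2 = 1 + 4 * (2 * l + 1) * k + 4 * k ^ 2 := by
    rw [hD, Real.sq_sqrt (by positivity)]
  have hDsq : (D : ℂ) ^ 2 = 1 + 4 * (2 * (l:ℂ) + 1) * (k:ℂ) + 4 * (k:ℂ) ^ 2 := by
    calc (D : ℂ) ^ 2 = ((D ^ 2 : ℝ) : ℂ) := by push_cast; ring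
      _ = _ := by rw [hDsq']; push_cast; ring
  rw [hdet]
  have hfact : -(y * (y ^ 2 - y - (2 * l + 1) * k - (k : ℂ) ^ 2))
      = -(y * ((y - (1/2 + (1/2) * D)) * (y - (1/2 - (1/2) * D)))) := by
    have h2 : (y - (1/2 + (1/2) * (D:ℂ))) * (y - (1/2 - (1/2) * (D:ℂ)))
        = y^2 - y + 1/4 - (1/4) * (D:ℂ)^2 := by ring
    rw [h2, hDsq]
    ring
  rw [hfact, neg_eq_zero, mul_eq_zero, mul_eq_zero, sub_eq_zero, sub_eq_zero]
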